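/- arXiv:2202.07491 — 2 statements merged into one kernel-verified Lean document; each statement's English description precedes it below -/
import Mathlib

section
/- Let n ≥ 1, 1 ≤ p < ∞, and let w be a T-invariant weight on ℝⁿ with dμ = w dx satisfying 0 < μ(B) < ∞ for all balls B. Then for every r > 0, cap_{p,μ}^{ℝⁿ}({0}, B(0,r)) = 2ⁿ · cap_{p,μ}^{X⁺}({0}, B(0,r) ∩ X⁺) = 2^{n−1} · cap_{p,μ}^{X_{ℝⁿ}}({0}, B(0,r) ∩ X_{ℝⁿ}), where the latter two capacities are taken with respect to X⁺ and the bow-tie X_{ℝⁿ} as the underlying metric measure spaces. -/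
open MeasureTheory Metric Set Filter ENNReal NNReal

noncomputable section

/-- Pointwise Lipschitz constant (as an extended nonnegative real);
it is `0` at isolated points since the limsup is over the punctured neighbourhood filter. -/
def lipConst {X : Type*} [MetricSpace X] (u : X → ℝ) (x : X) : ℝ≥0∞ :=
  Filter.limsup (fun y => ENNReal.ofReal (|u y - u x| / dist y x)) (nhdsWithin x {x}ᶜ)

/-- A real-valued function is Lipschitz (with some constant). -/
def IsLip {X : Type*} [MetricSpace X] (u : X → ℝ) : Prop :=
  ∃ L : NNReal, LipschitzWith L u

/-- A doubling measure on a metric space: balls have positive finite measure and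
`μ(B(x,2r)) ≤ C μ(B(x,r))`. -/
def IsDoubling {X : Type*} [MetricSpace X] [MeasurableSpace X] (μ : Measure X) : Prop :=
  ∃ C : ℝ≥0∞, ∀ (x : X) (r : ℝ), 0 < r →
    0 < μ (ball x r) ∧ μ (ball x r) < ⊤ ∧ μ (ball x (2 * r)) ≤ C * μ (ball x r)

/-- The (q,p)-Poincaré inequality (Lipschitz formulation) with dilation constant `lam`. -/
def PoincareWith {X : Type*} [MetricSpace X] [MeasurableSpace X] (μ : Measure X)
    (q p lam : ℝ) : Prop :=
  ∃ C : ℝ, 0 < C ∧ ∀ (x : X) (r : ℝ), 0 < r → ∀ u : X → ℝ, IsLip u →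
    ((∫⁻ y in ball x r,
        ENNReal.ofReal |u y - ⨍ z in ball x r, u z ∂μ| ^ q ∂μ) / μ (ball x r)) ^ (1 / q)
      ≤ ENNReal.ofReal (C * r) *
        ((∫⁻ y in ball x (lam * r), lipConst u y ^ p ∂μ) / μ (ball x (lam * r))) ^ (1 / p)

/-- `μ` supports a (q,p)-Poincaré inequality (Lipschitz formulation). -/
def SupportsPoincare {X : Type*} [MetricSpace X] [MeasurableSpace X] (μ : Measure X)
    (q p : ℝ) : Prop :=
  ∃ lam : ℝ, 1 ≤ lam ∧ PoincareWith μ q p lam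

/-- The variational p-capacity (Lipschitz formulation) of `E` with respect to `Ω`. -/
def varCap {X : Type*} [MetricSpace X] [MeasurableSpace X] (μ : Measure X) (p : ℝ)
    (E Ω : Set X) : ℝ≥0∞ :=
  ⨅ (u : X → ℝ) (_ : IsLip u ∧ (∀ x ∈ E, u x = 1) ∧ (∀ x ∉ Ω, u x = 0)),
    ∫⁻ x in Ω, lipConst u x ^ p ∂μ

/-- Euclidean n-space. -/
abbrev En (n : ℕ) := EuclideanSpace ℝ (Fin n)

/-- The weighted measure `dμ = w dx`. -/
def wMeasure {n : ℕ} (w : En n → ℝ) : Measure (En n) :=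
  volume.withDensity (fun x => ENNReal.ofReal (w x))

/-- The positive hyperquadrant. -/
def Xplus (n : ℕ) : Set (En n) := {x : En n | ∀ j : Fin n, 0 ≤ x j}

/-- The negative hyperquadrant. -/
def Xminus (n : ℕ) : Set (En n) := {x : En n | ∀ j : Fin n, x j ≤ 0}

/-- The Euclidean bow-tie. -/
def XBow (n : ℕ) : Set (En n) := Xplus n ∪ Xminus n

/-- The restriction of a measure to a subset, as a measure on the subtype. -/
def subMeasure {X : Type*} [MeasurableSpace X] (μ : Measure X) (S : Set X) : Measure S :=
  μ.comap Subtype.val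

/-- The folding map `T(x₁,…,xₙ) = (|x₁|,…,|xₙ|)`. -/
def Tmap {n : ℕ} (x : En n) : En n := WithLp.toLp 2 (fun j => |x j|)

/-- Muckenhoupt A_p condition (for 1 ≤ p < ∞). -/
def IsApWeight {α : Type*} [MetricSpace α] [MeasureSpace α] (p : ℝ) (w : α → ℝ) : Prop :=
  (p = 1 ∧ ∃ C : ℝ, 0 < C ∧ ∀ (x : α) (r : ℝ), 0 < r →
      (⨍ y in ball x r, w y ∂volume) ≤ C * essInf w (volume.restrict (ball x r))) ∨
  (1 < p ∧ ∃ C : ℝ, 0 < C ∧ ∀ (x : α) (r : ℝ), 0 < r →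
      (⨍ y in ball x r, w y ∂volume) *
        (⨍ y in ball x r, w y ^ (1 / (1 - p)) ∂volume) ^ (p - 1) ≤ C)

/-- The surface area ω_{n-1} of the unit sphere in ℝⁿ (with ω₀ = 2),
computed as n times the volume of the unit ball. -/
def sphereArea (n : ℕ) : ℝ := n * (volume (ball (0 : En n) 1)).toReal

/-- The two-sided capacity estimate
`cap_{p,μ}^{X⁺}({0}, B_r ∩ X⁺) ≃ r^{-p} μ(B_r)` for all `r > 0`. -/
def capCondPlus (n : ℕ) (μ : Measure (En n)) (p : ℝ) : Prop :=
  ∃ c : ℝ, 1 ≤ c ∧ ∀ r : ℝ, 0 < r →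
    ENNReal.ofReal c⁻¹ * (μ (ball 0 r) / ENNReal.ofReal (r ^ p)) ≤
      varCap (subMeasure μ (Xplus n)) p {x : Xplus n | (x : En n) = 0}
        (Subtype.val ⁻¹' ball 0 r) ∧
    varCap (subMeasure μ (Xplus n)) p {x : Xplus n | (x : En n) = 0}
        (Subtype.val ⁻¹' ball 0 r) ≤
      ENNReal.ofReal c * (μ (ball 0 r) / ENNReal.ofReal (r ^ p))

/-- `φ(ρ) = max{1, -log ρ}`. -/
def phi (ρ : ℝ) : ℝ := max 1 (-Real.log ρ)


/-!
Every sign pattern `ε` gives a reflection of `ℝⁿ` that preserves `μ` (since `w` is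
`T`-invariant) and maps `X⁺` onto the closed quadrant of sign `ε`; these `2ⁿ` quadrants cover
`ℝⁿ` and overlap only in coordinate hyperplanes, which are `μ`-null, and the bow-tie is the
union of the two quadrants of constant sign. Capacities compare in both directions through
`1`-Lipschitz maps, along which `lip` can only decrease: a test function on `X⁺` pulls back along
the folding map `T`, which makes its energy the same on every quadrant, while a test function
on `ℝⁿ` (or on the bow-tie) restricts along each reflection to a test function on `X⁺`.
-/

open Topology

section VarCap

variable {X Y : Type*} [MetricSpace X] [MetricSpace Y]

theorem lipConst_comp_le {φ : X → Y} (hφ : LipschitzWith 1 φ) (u : Y → ℝ) (x : X) :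
    lipConst (u ∘ φ) x ≤ lipConst u (φ x) := by
  refine le_of_forall_gt_imp_ge_of_dense fun a ha => ?_
  have hnear : ∀ᶠ z in 𝓝 (φ x), ENNReal.ofReal (|u z - u (φ x)| / dist z (φ x)) < a := by
    rw [← nhdsNE_sup_pure (φ x), Filter.eventually_sup]
    exact ⟨Filter.eventually_lt_of_limsup_lt ha, by simpa using zero_le.trans_lt ha⟩
  have hφx : Tendsto φ (𝓝[≠] x) (𝓝 (φ x)) :=
    (hφ.continuous.tendsto x).mono_left nhdsWithin_le_nhds
  refine Filter.limsup_le_of_le (by isBoundedDefault) ?_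
  filter_upwards [hφx.eventually hnear] with y hy
  refine le_trans ?_ hy.le
  rcases eq_or_ne (φ y) (φ x) with hxy | hxy
  · simp [hxy]
  · have hdist : dist (φ y) (φ x) ≤ dist y x := by simpa using hφ.dist_le_mul y x
    simp only [Function.comp_apply]
    gcongr
    exact dist_pos.2 hxy

/-- The test functions in the infimum defining `varCap μ p E Ω`. -/
def CapAdmissible (E Ω : Set X) (u : X → ℝ) : Prop :=
  IsLip u ∧ (∀ x ∈ E, u x = 1) ∧ ∀ x ∉ Ω, u x = 0

variable [MeasurableSpace X]

theorem varCap_le_lintegral_comp (μ : Measure X) {p : ℝ} (hp : 0 ≤ p) {E Ω : Set X}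
    {E' Ω' : Set Y} {φ : X → Y} (hφ : LipschitzWith 1 φ) (hE : MapsTo φ E E')
    (hΩ : φ ⁻¹' Ω' ⊆ Ω) {u : Y → ℝ} (hu : CapAdmissible E' Ω' u) :
    varCap μ p E Ω ≤ ∫⁻ x in Ω, lipConst u (φ x) ^ p ∂μ := by
  obtain ⟨⟨L, hL⟩, hu1, hu0⟩ := hu
  have hadm : CapAdmissible E Ω (u ∘ φ) :=
    ⟨⟨L * 1, hL.comp hφ⟩, fun x hx => hu1 _ (hE hx), fun x hx => hu0 _ fun h => hx (hΩ h)⟩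
  exact (iInf₂_le (u ∘ φ) hadm).trans
    (lintegral_mono fun x => ENNReal.rpow_le_rpow (lipConst_comp_le hφ u x) hp)

theorem varCap_le_mul_varCap [MeasurableSpace Y] {μ : Measure X} {ν : Measure Y} {p : ℝ}
    {E Ω : Set X} {E' Ω' : Set Y} {c : ℝ≥0∞} (hc₀ : c ≠ 0) (hc : c ≠ ∞)
    (h : ∀ u, CapAdmissible E' Ω' u → varCap μ p E Ω ≤ c * ∫⁻ y in Ω', lipConst u y ^ p ∂ν) :
    varCap μ p E Ω ≤ c * varCap ν p E' Ω' := by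
  calc varCap μ p E Ω
      ≤ ⨅ (u) (_ : CapAdmissible E' Ω' u), c * ∫⁻ y in Ω', lipConst u y ^ p ∂ν := le_iInf₂ h
    _ = c * varCap ν p E' Ω' := by simp_rw [varCap, ENNReal.mul_iInf_of_ne hc₀ hc]; rfl

end VarCap

theorem setLIntegral_subMeasure_preimage {α : Type*} [MeasurableSpace α] {μ : Measure α}
    {S : Set α} (hS : MeasurableSet S) (A : Set α) (g : α → ℝ≥0∞) :
    ∫⁻ x in (Subtype.val ⁻¹' A : Set S), g x ∂subMeasure μ S = ∫⁻ x in S ∩ A, g x ∂μ := by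
  rw [subMeasure, setLIntegral_subtype hS, Subtype.image_preimage_coe]

theorem measurePreserving_withDensity {α : Type*} [MeasurableSpace α] {μ : Measure α}
    {e : α ≃ᵐ α} (he : MeasurePreserving e μ μ) {f : α → ℝ≥0∞} (hf : ∀ x, f (e x) = f x) :
    MeasurePreserving e (μ.withDensity f) (μ.withDensity f) := by
  refine ⟨e.measurable, Measure.ext fun s hs => ?_⟩
  rw [e.map_apply, withDensity_apply _ (hs.preimage e.measurable), withDensity_apply _ hs,
    ← he.setLIntegral_comp_preimage_emb e.measurableEmbedding f s]
  simp only [hf]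

namespace Quadrant

variable {n : ℕ}

/-- The reflection in the coordinate hyperplanes `x j = 0` for which `ε j` holds. -/
def reflect (ε : Fin n → Bool) : En n ≃ₗᵢ[ℝ] En n :=
  LinearIsometryEquiv.piLpCongrRight 2
    fun j => if ε j then LinearIsometryEquiv.neg ℝ else LinearIsometryEquiv.refl ℝ ℝ

theorem reflect_apply (ε : Fin n → Bool) (x : En n) (j : Fin n) :
    reflect ε x j = if ε j then -x j else x j := by
  by_cases h : ε j <;> simp [reflect, h]

theorem reflect_reflect (ε : Fin n → Bool) (x : En n) : reflect ε (reflect ε x) = x := by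
  ext j
  by_cases h : ε j <;> simp [reflect_apply, h]

theorem Tmap_reflect (ε : Fin n → Bool) (x : En n) : Tmap (reflect ε x) = Tmap x := by
  ext j
  by_cases h : ε j <;> simp [Tmap, reflect_apply, h]

theorem measurePreserving_reflect {w : En n → ℝ} (hT : ∀ x, w (Tmap x) = w x)
    (ε : Fin n → Bool) : MeasurePreserving (reflect ε) (wMeasure w) (wMeasure w) :=
  measurePreserving_withDensity (e := (reflect ε).toHomeomorph.toMeasurableEquiv)
    (reflect ε).measurePreserving fun x => by
      rw [← hT, Homeomorph.toMeasurableEquiv_coe, LinearIsometryEquiv.coe_toHomeomorph,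
        Tmap_reflect, hT]

def quadrant (ε : Fin n → Bool) : Set (En n) := reflect ε ⁻¹' Xplus n

theorem mem_quadrant {ε : Fin n → Bool} {x : En n} :
    x ∈ quadrant ε ↔ ∀ j, if ε j then x j ≤ 0 else 0 ≤ x j := by
  refine forall_congr' fun j => ?_
  by_cases h : ε j <;> simp [reflect_apply, h]

theorem quadrant_false : quadrant (fun _ => false) = Xplus n := by
  ext x
  simp [mem_quadrant, Xplus]

theorem quadrant_true : quadrant (fun _ => true) = Xminus n := by
  ext x
  simp [mem_quadrant, Xminus]

theorem measurableSet_Xplus : MeasurableSet (Xplus n) := by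
  simp only [Xplus, ofPred_forall]
  exact MeasurableSet.iInter fun j =>
    measurableSet_le measurable_const (EuclideanSpace.proj (𝕜 := ℝ) j).continuous.measurable

theorem measurableSet_quadrant (ε : Fin n → Bool) : MeasurableSet (quadrant ε) :=
  measurableSet_Xplus.preimage (reflect ε).continuous.measurable

theorem measurableSet_XBow : MeasurableSet (XBow n) :=
  measurableSet_Xplus.union (quadrant_true ▸ measurableSet_quadrant _)

theorem iUnion_quadrant : ⋃ ε : Fin n → Bool, quadrant ε = univ := by
  refine eq_univ_of_forall fun x => mem_iUnion.2 ⟨fun j => decide (x j < 0), ?_⟩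
  refine mem_quadrant.2 fun j => ?_
  by_cases h : x j < 0
  · simp [h, h.le]
  · simp [h, not_lt.1 h]

theorem volume_setOf_coord_eq_zero (j : Fin n) : volume {x : En n | x j = 0} = 0 := by
  have hker : {x : En n | x j = 0} = LinearMap.ker (EuclideanSpace.projₗ (𝕜 := ℝ) j) := by
    ext x
    simp
  rw [hker]
  refine Measure.addHaar_submodule _ _ fun htop => ?_
  have hmem : EuclideanSpace.single j (1 : ℝ) ∈
      LinearMap.ker (EuclideanSpace.projₗ (𝕜 := ℝ) j) := htop ▸ Submodule.mem_top
  simp at hmem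

theorem aedisjoint_quadrant {ε ε' : Fin n → Bool} (hε : ε ≠ ε') :
    AEDisjoint volume (quadrant ε) (quadrant ε') := by
  obtain ⟨j, hj⟩ := Function.ne_iff.1 hε
  refine measure_mono_null (fun x ⟨hx, hx'⟩ => ?_) (volume_setOf_coord_eq_zero j)
  have h := mem_quadrant.1 hx j
  have h' := mem_quadrant.1 hx' j
  cases hεj : ε j <;> cases hεj' : ε' j <;> simp_all [le_antisymm_iff]

def fold (x : En n) : Xplus n := ⟨Tmap x, fun j => abs_nonneg (x j)⟩

theorem lipschitzWith_fold : LipschitzWith 1 (fold : En n → Xplus n) := by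
  refine LipschitzWith.of_dist_le_mul fun x y => ?_
  rw [NNReal.coe_one, one_mul, Subtype.dist_eq, EuclideanSpace.dist_eq, EuclideanSpace.dist_eq]
  gcongr with j
  simpa [fold, Tmap, Real.dist_eq] using abs_abs_sub_abs_le_abs_sub (x j) (y j)

theorem fold_reflect (ε : Fin n → Bool) (x : En n) : fold (reflect ε x) = fold x :=
  Subtype.ext (Tmap_reflect ε x)

theorem fold_coe (x : Xplus n) : fold (x : En n) = x :=
  Subtype.ext <| by ext j; exact abs_of_nonneg (x.2 j)

theorem coe_fold_zero : (fold (0 : En n) : En n) = 0 := by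
  ext j
  simp [fold, Tmap]

theorem norm_fold (x : En n) : ‖(fold x : En n)‖ = ‖x‖ := by
  simp [fold, Tmap, EuclideanSpace.norm_eq]

variable {w : En n → ℝ} {r : ℝ}

theorem setLIntegral_quadrant_inter_ball (hT : ∀ x, w (Tmap x) = w x) (ε : Fin n → Bool)
    (f : En n → ℝ≥0∞) :
    ∫⁻ x in quadrant ε ∩ ball 0 r, f x ∂wMeasure w =
      ∫⁻ x in Xplus n ∩ ball 0 r, f (reflect ε x) ∂wMeasure w := by
  rw [← (measurePreserving_reflect hT ε).setLIntegral_comp_preimage_emb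
    (reflect ε).toHomeomorph.measurableEmbedding]
  congr 2
  ext x
  simp [quadrant, reflect_reflect]

theorem setLIntegral_biUnion_quadrant_inter_ball (hT : ∀ x, w (Tmap x) = w x)
    (s : Finset (Fin n → Bool)) (f : En n → ℝ≥0∞) :
    ∫⁻ x in (⋃ ε ∈ s, quadrant ε) ∩ ball 0 r, f x ∂wMeasure w =
      ∑ ε ∈ s, ∫⁻ x in Xplus n ∩ ball 0 r, f (reflect ε x) ∂wMeasure w := by
  rw [iUnion₂_inter, lintegral_biUnion_finset₀]
  · exact Finset.sum_congr rfl fun ε _ => setLIntegral_quadrant_inter_ball hT ε f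
  · exact fun ε _ ε' _ hε => withDensity_absolutelyContinuous _ _
      (((aedisjoint_quadrant hε).mono inter_subset_left inter_subset_left))
  · exact fun ε _ => ((measurableSet_quadrant ε).inter measurableSet_ball).nullMeasurableSet

theorem setLIntegral_ball_eq_sum (hT : ∀ x, w (Tmap x) = w x) (f : En n → ℝ≥0∞) :
    ∫⁻ x in ball 0 r, f x ∂wMeasure w =
      ∑ ε, ∫⁻ x in Xplus n ∩ ball 0 r, f (reflect ε x) ∂wMeasure w := by
  rw [← setLIntegral_biUnion_quadrant_inter_ball hT]
  simp [iUnion_quadrant]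

def bowSigns : Finset (Fin n → Bool) := {fun _ => false, fun _ => true}

theorem card_bowSigns (hn : 1 ≤ n) : (bowSigns (n := n)).card = 2 :=
  Finset.card_pair fun h => Bool.false_ne_true (congrFun h ⟨0, hn⟩)

theorem setLIntegral_XBow_inter_ball (hT : ∀ x, w (Tmap x) = w x) (f : En n → ℝ≥0∞) :
    ∫⁻ x in XBow n ∩ ball 0 r, f x ∂wMeasure w =
      ∑ ε ∈ bowSigns, ∫⁻ x in Xplus n ∩ ball 0 r, f (reflect ε x) ∂wMeasure w := by
  rw [← setLIntegral_biUnion_quadrant_inter_ball hT]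
  simp [bowSigns, quadrant_false, quadrant_true, XBow]

theorem reflect_mem_XBow {ε : Fin n → Bool} (hε : ε ∈ bowSigns) {x : En n}
    (hx : x ∈ Xplus n) : reflect ε x ∈ XBow n := by
  have hq : reflect ε x ∈ quadrant ε := by simpa [quadrant, reflect_reflect] using hx
  simp only [bowSigns, Finset.mem_insert, Finset.mem_singleton] at hε
  rcases hε with rfl | rfl
  · exact Or.inl (quadrant_false ▸ hq)
  · exact Or.inr (quadrant_true ▸ hq)

end Quadrant

section OriginCap

open Quadrant

variable {n : ℕ} {w : En n → ℝ} {p r : ℝ}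

/-- `cap_{p,μ}^S({0}, B(0,r) ∩ S)`, with `S` as the underlying metric measure space. -/
def originCap (μ : Measure (En n)) (p r : ℝ) (S : Set (En n)) : ℝ≥0∞ :=
  varCap (subMeasure μ S) p {x : S | (x : En n) = 0} (Subtype.val ⁻¹' ball 0 r)

theorem setLIntegral_lipConst_fold (μ : Measure (En n)) (u : Xplus n → ℝ) :
    ∫⁻ x in Xplus n ∩ ball 0 r, lipConst u (fold x) ^ p ∂μ =
      ∫⁻ x in (Subtype.val ⁻¹' ball 0 r : Set (Xplus n)), lipConst u x ^ p
        ∂subMeasure μ (Xplus n) := by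
  rw [← setLIntegral_subMeasure_preimage measurableSet_Xplus]
  simp only [fold_coe]

theorem varCap_le_two_pow_mul_originCap_Xplus (hT : ∀ x, w (Tmap x) = w x) (hp : 0 ≤ p) :
    varCap (wMeasure w) p {0} (ball 0 r) ≤ 2 ^ n * originCap (wMeasure w) p r (Xplus n) := by
  refine varCap_le_mul_varCap (pow_ne_zero _ two_ne_zero) (ENNReal.pow_ne_top ofNat_ne_top)
    fun u hu => ?_
  calc varCap (wMeasure w) p {0} (ball 0 r)
      ≤ ∫⁻ x in ball 0 r, lipConst u (fold x) ^ p ∂wMeasure w :=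
        varCap_le_lintegral_comp _ hp lipschitzWith_fold
          (fun x (hx : x = 0) => by simp [hx, coe_fold_zero])
          (fun x hx => by simpa [norm_fold] using hx) hu
    _ = ∑ _ε : Fin n → Bool, ∫⁻ x in Xplus n ∩ ball 0 r, lipConst u (fold x) ^ p
          ∂wMeasure w := by
        simp only [setLIntegral_ball_eq_sum hT, fold_reflect]
    _ = _ := by simp [setLIntegral_lipConst_fold]

theorem two_pow_mul_originCap_Xplus_le_varCap (hT : ∀ x, w (Tmap x) = w x) (hp : 0 ≤ p) :
    2 ^ n * originCap (wMeasure w) p r (Xplus n) ≤ varCap (wMeasure w) p {0} (ball 0 r) := by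
  refine le_iInf₂ fun v hv => ?_
  have hrestrict (ε : Fin n → Bool) : originCap (wMeasure w) p r (Xplus n) ≤
      ∫⁻ x in Xplus n ∩ ball 0 r, lipConst v (reflect ε x) ^ p ∂wMeasure w := by
    rw [← setLIntegral_subMeasure_preimage measurableSet_Xplus]
    refine varCap_le_lintegral_comp _ hp (φ := fun x : Xplus n => reflect ε x)
      ((reflect ε).isometry.comp isometry_subtype_coe).lipschitz
      (fun x (hx : (x : En n) = 0) => by simp [hx]) (fun x hx => by simpa using hx) hv
  calc 2 ^ n * originCap (wMeasure w) p r (Xplus n)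
      = ∑ _ε : Fin n → Bool, originCap (wMeasure w) p r (Xplus n) := by simp
    _ ≤ ∑ ε, ∫⁻ x in Xplus n ∩ ball 0 r, lipConst v (reflect ε x) ^ p ∂wMeasure w :=
        Finset.sum_le_sum fun ε _ => hrestrict ε
    _ = ∫⁻ x in ball 0 r, lipConst v x ^ p ∂wMeasure w :=
        (setLIntegral_ball_eq_sum hT fun x => lipConst v x ^ p).symm

theorem originCap_XBow_le_two_mul (hT : ∀ x, w (Tmap x) = w x) (hn : 1 ≤ n) (hp : 0 ≤ p) :
    originCap (wMeasure w) p r (XBow n) ≤ 2 * originCap (wMeasure w) p r (Xplus n) := by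
  refine varCap_le_mul_varCap two_ne_zero ofNat_ne_top fun u hu => ?_
  calc originCap (wMeasure w) p r (XBow n)
      ≤ ∫⁻ x in (Subtype.val ⁻¹' ball 0 r : Set (XBow n)), lipConst u (fold x) ^ p
          ∂subMeasure (wMeasure w) (XBow n) := by
        refine varCap_le_lintegral_comp _ hp (φ := fold ∘ Subtype.val) ?_ ?_ ?_ hu
        · simpa using lipschitzWith_fold.comp isometry_subtype_coe.lipschitz
        · rintro x (hx : (x : En n) = 0)
          simp [hx, coe_fold_zero]
        · intro x hx
          simpa [norm_fold] using hx
    _ = ∑ _ε ∈ bowSigns (n := n), ∫⁻ x in Xplus n ∩ ball 0 r, lipConst u (fold x) ^ p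
          ∂wMeasure w := by
        rw [setLIntegral_subMeasure_preimage measurableSet_XBow _
          fun y => lipConst u (fold y) ^ p, setLIntegral_XBow_inter_ball hT]
        simp only [fold_reflect]
    _ = _ := by
        rw [Finset.sum_const, card_bowSigns hn, setLIntegral_lipConst_fold, two_nsmul, two_mul]

theorem two_mul_originCap_Xplus_le (hT : ∀ x, w (Tmap x) = w x) (hn : 1 ≤ n) (hp : 0 ≤ p) :
    2 * originCap (wMeasure w) p r (Xplus n) ≤ originCap (wMeasure w) p r (XBow n) := by
  refine le_iInf₂ fun v hv => ?_
  -- `lip v` read as a function on `ℝⁿ`, vanishing off the bow-tie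
  set g : En n → ℝ≥0∞ := Function.extend Subtype.val (fun x : XBow n => lipConst v x ^ p) 0
  have hg (x : XBow n) : g x = lipConst v x ^ p := Subtype.val_injective.extend_apply _ _ x
  have hrestrict {ε} (hε : ε ∈ bowSigns) : originCap (wMeasure w) p r (Xplus n) ≤
      ∫⁻ x in Xplus n ∩ ball 0 r, g (reflect ε x) ∂wMeasure w := by
    set φ : Xplus n → XBow n := fun x => ⟨reflect ε x, reflect_mem_XBow hε x.2⟩
    rw [← setLIntegral_subMeasure_preimage measurableSet_Xplus]
    refine (varCap_le_lintegral_comp _ hp (φ := φ) ?_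
      (fun x (hx : (x : En n) = 0) => by simp [φ, hx]) (fun x hx => by simpa [φ] using hx)
      hv).trans_eq (setLIntegral_congr_fun ?_ fun x _ => (hg (φ x)).symm)
    · exact LipschitzWith.subtype_mk
        ((reflect ε).isometry.comp isometry_subtype_coe).lipschitz _
    · exact measurable_subtype_coe measurableSet_ball
  calc 2 * originCap (wMeasure w) p r (Xplus n)
      = ∑ _ε ∈ bowSigns, originCap (wMeasure w) p r (Xplus n) := by
        rw [Finset.sum_const, card_bowSigns hn, two_nsmul, two_mul]
    _ ≤ ∑ ε ∈ bowSigns, ∫⁻ x in Xplus n ∩ ball 0 r, g (reflect ε x) ∂wMeasure w :=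
        Finset.sum_le_sum fun ε hε => hrestrict hε
    _ = ∫⁻ x in (Subtype.val ⁻¹' ball 0 r : Set (XBow n)), lipConst v x ^ p
          ∂subMeasure (wMeasure w) (XBow n) := by
        rw [← setLIntegral_XBow_inter_ball hT, ← setLIntegral_subMeasure_preimage
          measurableSet_XBow]
        simp only [hg]

theorem varCap_eq_two_pow_mul_originCap_Xplus (hT : ∀ x, w (Tmap x) = w x) (hp : 0 ≤ p) :
    varCap (wMeasure w) p {0} (ball 0 r) = 2 ^ n * originCap (wMeasure w) p r (Xplus n) :=
  (varCap_le_two_pow_mul_originCap_Xplus hT hp).antisymm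
    (two_pow_mul_originCap_Xplus_le_varCap hT hp)

theorem originCap_XBow_eq_two_mul (hT : ∀ x, w (Tmap x) = w x) (hn : 1 ≤ n) (hp : 0 ≤ p) :
    originCap (wMeasure w) p r (XBow n) = 2 * originCap (wMeasure w) p r (Xplus n) :=
  (originCap_XBow_le_two_mul hT hn hp).antisymm (two_mul_originCap_Xplus_le hT hn hp)

end OriginCap

theorem statement6_general (n : ℕ) (hn : 1 ≤ n) (p : ℝ) (hp : 1 ≤ p)
    (w : En n → ℝ) (hT : ∀ x, w (Tmap x) = w x)
    (r : ℝ) :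
    varCap (wMeasure w) p ({0} : Set (En n)) (ball 0 r) =
      2 ^ n * varCap (subMeasure (wMeasure w) (Xplus n)) p
        {x : Xplus n | (x : En n) = 0} (Subtype.val ⁻¹' ball 0 r) ∧
    varCap (wMeasure w) p ({0} : Set (En n)) (ball 0 r) =
      2 ^ (n - 1) * varCap (subMeasure (wMeasure w) (XBow n)) p
        {x : XBow n | (x : En n) = 0} (Subtype.val ⁻¹' ball 0 r) := by
  have hp₀ : 0 ≤ p := zero_le_one.trans hp
  have hplus := varCap_eq_two_pow_mul_originCap_Xplus (r := r) hT hp₀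
  refine ⟨hplus, ?_⟩
  rw [hplus, ← originCap, originCap_XBow_eq_two_mul hT hn hp₀, ← mul_assoc, ← pow_succ,
    Nat.sub_add_cancel hn]

theorem statement6 (n : ℕ) (hn : 1 ≤ n) (p : ℝ) (hp : 1 ≤ p)
    (w : En n → ℝ) (hT : ∀ x, w (Tmap x) = w x)
    (hw0 : ∀ x, 0 ≤ w x) (hloc : LocallyIntegrable w volume)
    (hballs : ∀ (x : En n) (r : ℝ), 0 < r →
      0 < wMeasure w (ball x r) ∧ wMeasure w (ball x r) < ⊤)
    (r : ℝ) (hr : 0 < r) :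
    varCap (wMeasure w) p ({0} : Set (En n)) (ball 0 r) =
      2 ^ n * varCap (subMeasure (wMeasure w) (Xplus n)) p
        {x : Xplus n | (x : En n) = 0} (Subtype.val ⁻¹' ball 0 r) ∧
    varCap (wMeasure w) p ({0} : Set (En n)) (ball 0 r) =
      2 ^ (n - 1) * varCap (subMeasure (wMeasure w) (XBow n)) p
        {x : XBow n | (x : En n) = 0} (Subtype.val ⁻¹' ball 0 r) :=
  statement6_general n hn p hp w hT r
end
end

section
/- Let n ≥ 1 and let w be a T-invariant weight on ℝⁿ with dμ = w dx satisfying 0 < μ(B) < ∞ for all balls B. Then μ is doubling on ℝⁿ if and only if its restriction is doubling on the positive hyperquadrant X⁺, which in turn holds if and only if its restriction is doubling on the bow-tie X_{ℝⁿ}. -/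
open MeasureTheory Metric Set Filter ENNReal NNReal

noncomputable section

/-
Flipping the signs of some coordinates is a linear isometry of ℝⁿ preserving Lebesgue measure
and, by T-invariance, the weight, hence μ. For x ∈ X⁺ the ball B(x,r) is covered by the preimages
of B(x,r) ∩ X⁺ under the 2ⁿ sign flips, because T is 1-Lipschitz, fixes x and agrees at each point
with some sign flip; so μ(B(x,r)) ≤ 2ⁿ μ(B(x,r) ∩ X⁺), and likewise on X⁻ by negation. As moreover
μ(B(x,r)) = μ(B(Tx,r)), every ball of ℝⁿ is comparable to the trace of a ball centred in X⁺ on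
X⁺ (or on the bow-tie), and doubling transfers both ways.
-/

section Doubling

variable {X : Type*} [MetricSpace X] [MeasurableSpace X]
  {μ : Measure X} {S : Set X}

lemma subMeasure_ball (hS : MeasurableSet S) (x : S) (r : ℝ) :
    subMeasure μ S (ball x r) = μ (ball (x : X) r ∩ S) := by
  rw [subMeasure, ← Subtype.preimage_ball,
    (MeasurableEmbedding.subtype_coe hS).comap_apply, Subtype.image_preimage_coe, inter_comm]

lemma IsDoubling.to_subMeasure (hμ : IsDoubling μ) (hS : MeasurableSet S) {K : ℝ≥0∞}
    (hK : ∀ x ∈ S, ∀ r : ℝ, μ (ball x r) ≤ K * μ (ball x r ∩ S)) :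
    IsDoubling (subMeasure μ S) := by
  obtain ⟨C, hC⟩ := hμ
  refine ⟨C * K, fun x r hr => ?_⟩
  obtain ⟨hpos, hfin, hdbl⟩ := hC x r hr
  rw [subMeasure_ball hS, subMeasure_ball hS]
  refine ⟨?_, (measure_mono inter_subset_left).trans_lt hfin, ?_⟩
  · refine pos_iff_ne_zero.mpr fun h0 => hpos.ne' ?_
    simpa [h0] using hK x x.2 r
  · calc μ (ball (x : X) (2 * r) ∩ S) ≤ μ (ball (x : X) (2 * r)) := measure_mono inter_subset_left
      _ ≤ C * μ (ball (x : X) r) := hdbl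
      _ ≤ C * (K * μ (ball (x : X) r ∩ S)) := by gcongr; exact hK x x.2 r
      _ = C * K * μ (ball (x : X) r ∩ S) := (mul_assoc _ _ _).symm

lemma IsDoubling.of_subMeasure (hμS : IsDoubling (subMeasure μ S)) (hS : MeasurableSet S)
    (hballs : ∀ (x : X) (r : ℝ), 0 < r → 0 < μ (ball x r) ∧ μ (ball x r) < ⊤) {K : ℝ≥0∞}
    (hK : ∀ x ∈ S, ∀ r : ℝ, μ (ball x r) ≤ K * μ (ball x r ∩ S))
    (hcentre : ∀ x : X, ∃ x' ∈ S, ∀ r : ℝ, μ (ball x' r) = μ (ball x r)) :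
    IsDoubling μ := by
  obtain ⟨C, hC⟩ := hμS
  refine ⟨K * C, fun x r hr => ⟨(hballs x r hr).1, (hballs x r hr).2, ?_⟩⟩
  obtain ⟨x', hx'S, hx'⟩ := hcentre x
  have hdbl := (hC ⟨x', hx'S⟩ r hr).2.2
  rw [subMeasure_ball hS, subMeasure_ball hS] at hdbl
  calc μ (ball x (2 * r)) = μ (ball x' (2 * r)) := (hx' (2 * r)).symm
    _ ≤ K * μ (ball x' (2 * r) ∩ S) := hK x' hx'S _
    _ ≤ K * (C * μ (ball x' r ∩ S)) := by gcongr
    _ ≤ K * (C * μ (ball x' r)) := by gcongr; exact inter_subset_left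
    _ = K * C * μ (ball x r) := by rw [hx' r, mul_assoc]

lemma isDoubling_iff_subMeasure (hS : MeasurableSet S)
    (hballs : ∀ (x : X) (r : ℝ), 0 < r → 0 < μ (ball x r) ∧ μ (ball x r) < ⊤) {K : ℝ≥0∞}
    (hK : ∀ x ∈ S, ∀ r : ℝ, μ (ball x r) ≤ K * μ (ball x r ∩ S))
    (hcentre : ∀ x : X, ∃ x' ∈ S, ∀ r : ℝ, μ (ball x' r) = μ (ball x r)) :
    IsDoubling μ ↔ IsDoubling (subMeasure μ S) :=
  ⟨fun h => h.to_subMeasure hS hK, fun h => h.of_subMeasure hS hballs hK hcentre⟩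

end Doubling

lemma withDensity_preimage_eq {α : Type*} [MeasurableSpace α] {μ : Measure α} [SFinite μ]
    {f : α → α} (hf : MeasurePreserving f μ μ) (he : MeasurableEmbedding f) {g : α → ℝ≥0∞}
    (hg : ∀ x, g (f x) = g x) (s : Set α) :
    μ.withDensity g (f ⁻¹' s) = μ.withDensity g s := by
  rw [withDensity_apply', withDensity_apply', ← hf.setLIntegral_comp_preimage_emb he g s]
  simp only [hg]

section Euclidean

variable {n : ℕ}

def signFlip (n : ℕ) (ε : Fin n → Bool) : En n ≃ₗᵢ[ℝ] En n :=
  LinearIsometryEquiv.piLpCongrRight 2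
    (fun j => if ε j then LinearIsometryEquiv.neg ℝ else LinearIsometryEquiv.refl ℝ ℝ)

lemma signFlip_apply (ε : Fin n → Bool) (x : En n) (j : Fin n) :
    signFlip n ε x j = if ε j then -x j else x j := by
  simp only [signFlip, LinearIsometryEquiv.piLpCongrRight_apply, PiLp.toLp_apply]
  split <;> simp

lemma Tmap_signFlip (ε : Fin n → Bool) (x : En n) : Tmap (signFlip n ε x) = Tmap x := by
  ext j
  simp only [Tmap, signFlip_apply, PiLp.toLp_apply]
  split <;> simp

lemma signFlip_negSigns (x : En n) : signFlip n (fun j => decide (x j < 0)) x = Tmap x := by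
  ext j
  simp only [signFlip_apply, Tmap, PiLp.toLp_apply]
  by_cases h : x j < 0
  · simp [h, abs_of_neg h]
  · simp [h, abs_of_nonneg (not_lt.mp h)]

lemma Tmap_neg (x : En n) : Tmap (-x) = Tmap x := by
  ext j
  simp [Tmap]

lemma Tmap_of_mem_Xplus {x : En n} (hx : x ∈ Xplus n) : Tmap x = x := by
  ext j
  exact abs_of_nonneg (hx j)

lemma Tmap_mem_Xplus (x : En n) : Tmap x ∈ Xplus n := fun j => abs_nonneg (x j)

lemma dist_Tmap_le (x y : En n) : dist (Tmap x) (Tmap y) ≤ dist x y := by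
  rw [EuclideanSpace.dist_eq, EuclideanSpace.dist_eq]
  gcongr with j
  simpa only [Tmap, Real.dist_eq, PiLp.toLp_apply] using abs_abs_sub_abs_le_abs_sub (x j) (y j)

lemma measurableSet_Xplus : MeasurableSet (Xplus n) := by
  simp only [Xplus, ofPred_forall]
  exact .iInter fun j => measurableSet_le measurable_const (by fun_prop)

lemma measurableSet_Xminus : MeasurableSet (Xminus n) := by
  simp only [Xminus, ofPred_forall]
  exact .iInter fun j => measurableSet_le (by fun_prop) measurable_const

lemma measurableSet_XBow : MeasurableSet (XBow n) :=
  measurableSet_Xplus.union measurableSet_Xminus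

lemma neg_preimage_ball_neg_inter_Xplus (x : En n) (r : ℝ) :
    Neg.neg ⁻¹' (ball (-x) r ∩ Xplus n) = ball x r ∩ Xminus n := by
  ext y
  simp [Xplus, Xminus]

variable {w : En n → ℝ}

lemma wMeasure_preimage (e : En n ≃ₗᵢ[ℝ] En n) (he : ∀ x, w (e x) = w x) (s : Set (En n)) :
    wMeasure w (e ⁻¹' s) = wMeasure w s :=
  withDensity_preimage_eq e.measurePreserving e.toHomeomorph.measurableEmbedding
    (fun x => by rw [he]) s

lemma apply_signFlip (hT : ∀ x, w (Tmap x) = w x) (ε : Fin n → Bool) (x : En n) :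
    w (signFlip n ε x) = w x := by
  rw [← hT, Tmap_signFlip, hT]

lemma apply_neg (hT : ∀ x, w (Tmap x) = w x) (x : En n) : w (-x) = w x := by
  rw [← hT, Tmap_neg, hT]

lemma wMeasure_ball_Tmap (hT : ∀ x, w (Tmap x) = w x) (x : En n) (r : ℝ) :
    wMeasure w (ball (Tmap x) r) = wMeasure w (ball x r) := by
  rw [← signFlip_negSigns, ← wMeasure_preimage _ (apply_signFlip hT _),
    (signFlip n _).isometry.preimage_ball]

lemma wMeasure_ball_le_inter_Xplus (hT : ∀ x, w (Tmap x) = w x) {x : En n} (hx : x ∈ Xplus n)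
    (r : ℝ) : wMeasure w (ball x r) ≤ 2 ^ n * wMeasure w (ball x r ∩ Xplus n) := by
  have hcover : ball x r ⊆ ⋃ ε : Fin n → Bool, signFlip n ε ⁻¹' (ball x r ∩ Xplus n) := by
    intro y hy
    refine mem_iUnion.mpr ⟨fun j => decide (y j < 0), ?_⟩
    rw [mem_preimage, signFlip_negSigns]
    refine ⟨?_, Tmap_mem_Xplus y⟩
    calc dist (Tmap y) x = dist (Tmap y) (Tmap x) := by rw [Tmap_of_mem_Xplus hx]
      _ ≤ dist y x := dist_Tmap_le y x
      _ < r := hy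
  calc wMeasure w (ball x r)
      ≤ ∑ ε : Fin n → Bool, wMeasure w (signFlip n ε ⁻¹' (ball x r ∩ Xplus n)) :=
        (measure_mono hcover).trans (measure_iUnion_fintype_le _ _)
    _ = 2 ^ n * wMeasure w (ball x r ∩ Xplus n) := by
        simp only [wMeasure_preimage _ (apply_signFlip hT _), Finset.sum_const, Finset.card_univ,
          Fintype.card_fun, Fintype.card_bool, Fintype.card_fin, nsmul_eq_mul, Nat.cast_pow,
          Nat.cast_ofNat]

lemma wMeasure_ball_le_inter_Xminus (hT : ∀ x, w (Tmap x) = w x) {x : En n} (hx : x ∈ Xminus n)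
    (r : ℝ) : wMeasure w (ball x r) ≤ 2 ^ n * wMeasure w (ball x r ∩ Xminus n) := by
  have hneg : ∀ y, w (LinearIsometryEquiv.neg ℝ y) = w y := apply_neg hT
  calc wMeasure w (ball x r) = wMeasure w (ball (-x) r) := by
        rw [← wMeasure_preimage _ hneg]
        simp
    _ ≤ 2 ^ n * wMeasure w (ball (-x) r ∩ Xplus n) :=
        wMeasure_ball_le_inter_Xplus hT (fun j => neg_nonneg.mpr (hx j)) r
    _ = 2 ^ n * wMeasure w (ball x r ∩ Xminus n) := by
        rw [← wMeasure_preimage _ hneg, LinearIsometryEquiv.coe_neg,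
          neg_preimage_ball_neg_inter_Xplus]

lemma wMeasure_ball_le_inter_XBow (hT : ∀ x, w (Tmap x) = w x) {x : En n} (hx : x ∈ XBow n)
    (r : ℝ) : wMeasure w (ball x r) ≤ 2 ^ n * wMeasure w (ball x r ∩ XBow n) := by
  rcases hx with hx | hx
  · exact (wMeasure_ball_le_inter_Xplus hT hx r).trans (by gcongr; exact subset_union_left)
  · exact (wMeasure_ball_le_inter_Xminus hT hx r).trans (by gcongr; exact subset_union_right)

end Euclidean

theorem statement7_general (n : ℕ)
    (w : En n → ℝ) (hT : ∀ x, w (Tmap x) = w x)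
    (hballs : ∀ (x : En n) (r : ℝ), 0 < r →
      0 < wMeasure w (ball x r) ∧ wMeasure w (ball x r) < ⊤) :
    (IsDoubling (wMeasure w) ↔ IsDoubling (subMeasure (wMeasure w) (Xplus n))) ∧
    (IsDoubling (subMeasure (wMeasure w) (Xplus n)) ↔
      IsDoubling (subMeasure (wMeasure w) (XBow n))) := by
  have hcentre : ∀ x : En n, ∃ x' ∈ Xplus n, ∀ r : ℝ,
      wMeasure w (ball x' r) = wMeasure w (ball x r) :=
    fun x => ⟨Tmap x, Tmap_mem_Xplus x, wMeasure_ball_Tmap hT x⟩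
  have hplus := isDoubling_iff_subMeasure measurableSet_Xplus hballs
    (fun _ => wMeasure_ball_le_inter_Xplus hT) hcentre
  have hbow := isDoubling_iff_subMeasure measurableSet_XBow hballs
    (fun _ => wMeasure_ball_le_inter_XBow hT)
    (fun x => (hcentre x).imp fun _ ⟨hx', h⟩ => ⟨Or.inl hx', h⟩)
  exact ⟨hplus, hplus.symm.trans hbow⟩

theorem statement7 (n : ℕ) (hn : 1 ≤ n)
    (w : En n → ℝ) (hT : ∀ x, w (Tmap x) = w x)
    (hw0 : ∀ x, 0 ≤ w x) (hloc : LocallyIntegrable w volume)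
    (hballs : ∀ (x : En n) (r : ℝ), 0 < r →
      0 < wMeasure w (ball x r) ∧ wMeasure w (ball x r) < ⊤) :
    (IsDoubling (wMeasure w) ↔ IsDoubling (subMeasure (wMeasure w) (Xplus n))) ∧
    (IsDoubling (subMeasure (wMeasure w) (Xplus n)) ↔
      IsDoubling (subMeasure (wMeasure w) (XBow n))) :=
  statement7_general n w hT hballs
end
end
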